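/- arXiv:2403.03057 — 3 statements merged into one kernel-verified Lean document; each statement's English description precedes it below -/
import Mathlib

section
/- Soundness of local analyses: for every set of lifelines L ⊆ ℒ, every δ ∈ ℕ, every interaction i ∈ 𝕀(L), and every multi-trace μ ∈ 𝕄(L), if (i,μ) ⤳* Ok then ω_{L,δ}(i,μ) holds, i.e., for every lifeline l ∈ L the local analysis (rmv_{L∖{l}}(i), μ_|l[0..δ]) ⤳* Ok succeeds. -/
open scoped Classical

namespace RV

/-- A communication action: a lifeline, a kind (`true` = emission `!`,
`false` = reception `?`) and a message. -/
structure Action (Λ M : Type) where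
  lifeline : Λ
  kind : Bool
  msg : M

/-- The interaction language: empty interaction, actions, the three loop
operators and the four binary operators. -/
inductive Interaction (Λ M : Type) : Type where
  | empty : Interaction Λ M
  | act : Action Λ M → Interaction Λ M
  | loopS : Interaction Λ M → Interaction Λ M
  | loopW : Interaction Λ M → Interaction Λ M
  | loopP : Interaction Λ M → Interaction Λ M
  | strict : Interaction Λ M → Interaction Λ M → Interaction Λ M
  | seq : Interaction Λ M → Interaction Λ M → Interaction Λ M
  | par : Interaction Λ M → Interaction Λ M → Interaction Λ M
  | alt : Interaction Λ M → Interaction Λ M → Interaction Λ M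

variable {Λ M : Type}

/-- `i ∈ 𝕀(L)` : all actions of `i` occur on lifelines belonging to `L`. -/
def Interaction.lifelinesIn (L : Set Λ) : Interaction Λ M → Prop
  | .empty => True
  | .act a => a.lifeline ∈ L
  | .loopS i => i.lifelinesIn L
  | .loopW i => i.lifelinesIn L
  | .loopP i => i.lifelinesIn L
  | .strict i1 i2 => i1.lifelinesIn L ∧ i2.lifelinesIn L
  | .seq i1 i2 => i1.lifelinesIn L ∧ i2.lifelinesIn L
  | .par i1 i2 => i1.lifelinesIn L ∧ i2.lifelinesIn L
  | .alt i1 i2 => i1.lifelinesIn L ∧ i2.lifelinesIn L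

/-- Lifeline removal `rmv_H` on interactions : actions occurring on a
lifeline of `H` are replaced by the empty interaction, the term structure
is preserved (no simplification). -/
noncomputable def rmv (H : Set Λ) : Interaction Λ M → Interaction Λ M
  | .empty => .empty
  | .act a => if a.lifeline ∈ H then .empty else .act a
  | .loopS i => .loopS (rmv H i)
  | .loopW i => .loopW (rmv H i)
  | .loopP i => .loopP (rmv H i)
  | .strict i1 i2 => .strict (rmv H i1) (rmv H i2)
  | .seq i1 i2 => .seq (rmv H i1) (rmv H i2)
  | .par i1 i2 => .par (rmv H i1) (rmv H i2)
  | .alt i1 i2 => .alt (rmv H i1) (rmv H i2)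

/-- The subterm of an interaction at a position (Dewey notation,
`false` = child 1, `true` = child 2); `none` when the position is invalid.
The positions of `i` are exactly those `p` with `(subtermAt i p).isSome`,
and the symbol `i(p)` is the head symbol of `subtermAt i p`. -/
def subtermAt : Interaction Λ M → List Bool → Option (Interaction Λ M)
  | i, [] => some i
  | .loopS i, false :: p => subtermAt i p
  | .loopW i, false :: p => subtermAt i p
  | .loopP i, false :: p => subtermAt i p
  | .strict i1 _, false :: p => subtermAt i1 p
  | .strict _ i2, true :: p => subtermAt i2 p
  | .seq i1 _, false :: p => subtermAt i1 p
  | .seq _ i2, true :: p => subtermAt i2 p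
  | .par i1 _, false :: p => subtermAt i1 p
  | .par _ i2, true :: p => subtermAt i2 p
  | .alt i1 _, false :: p => subtermAt i1 p
  | .alt _ i2, true :: p => subtermAt i2 p
  | _, _ => none

/-- A multi-trace : one local trace per lifeline (components on lifelines
outside the relevant set `L` are required to be empty, see
`MultiTrace.over`). -/
abbrev MultiTrace (Λ M : Type) := Λ → List (Action Λ M)

namespace MultiTrace

/-- `a ∧ μ` : prepend action `a` to the component of `μ` on `θ(a)`. -/
noncomputable def prepend (a : Action Λ M) (μ : MultiTrace Λ M) : MultiTrace Λ M :=
  fun l => if l = a.lifeline then a :: μ l else μ l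

/-- `μ ∧ a` : append action `a` to the component of `μ` on `θ(a)`. -/
noncomputable def append (μ : MultiTrace Λ M) (a : Action Λ M) : MultiTrace Λ M :=
  fun l => if l = a.lifeline then μ l ++ [a] else μ l

/-- The empty multi-trace `ε_L`. -/
def eps : MultiTrace Λ M := fun _ => []

/-- `μ ∈ 𝕄(L)` : components vanish outside `L` and every action of the
component on `l` occurs on `l`. -/
def isOver (L : Set Λ) (μ : MultiTrace Λ M) : Prop :=
  (∀ l ∉ L, μ l = []) ∧ ∀ l, ∀ a ∈ μ l, a.lifeline = l

/-- Lifeline removal `rmv_H` on multi-traces : restriction of the tuple of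
components to `L ∖ H` (removed components become empty). -/
noncomputable def rmv (H : Set Λ) (μ : MultiTrace Λ M) : MultiTrace Λ M :=
  fun l => if l ∈ H then [] else μ l

/-- Strict sequencing `μ1 ; μ2` of multi-traces : componentwise
concatenation. -/
def concat (μ1 μ2 : MultiTrace Λ M) : MultiTrace Λ M := fun l => μ1 l ++ μ2 l

/-- Multi-prefix relation : componentwise word prefix. -/
def isPrefixOf (μ' μ : MultiTrace Λ M) : Prop := ∀ l, μ' l <+: μ l

end MultiTrace

/-- Interleaving `μ ∈ μ1 || μ2` of multi-traces. -/
inductive MTShuffle : MultiTrace Λ M → MultiTrace Λ M → MultiTrace Λ M → Prop where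
  | nilL (μ : MultiTrace Λ M) : MTShuffle MultiTrace.eps μ μ
  | nilR (μ : MultiTrace Λ M) : MTShuffle μ MultiTrace.eps μ
  | left {μ1 μ2 μ : MultiTrace Λ M} (a : Action Λ M) :
      MTShuffle μ1 μ2 μ → MTShuffle (MultiTrace.prepend a μ1) μ2 (MultiTrace.prepend a μ)
  | right {μ1 μ2 μ : MultiTrace Λ M} (a : Action Λ M) :
      MTShuffle μ1 μ2 μ → MTShuffle μ1 (MultiTrace.prepend a μ2) (MultiTrace.prepend a μ)

/-- Interleaving (shuffle) `t ∈ t1 || t2` of global traces (words). -/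
inductive ListShuffle {α : Type} : List α → List α → List α → Prop where
  | nil : ListShuffle [] [] []
  | left {t1 t2 t : List α} (a : α) : ListShuffle t1 t2 t → ListShuffle (a :: t1) t2 (a :: t)
  | right {t1 t2 t : List α} (a : α) : ListShuffle t1 t2 t → ListShuffle t1 (a :: t2) (a :: t)

/-- Conflict predicate `t ⫫ l` : the trace `t` contains an action on `l`. -/
def conflicts (t : List (Action Λ M)) (l : Λ) : Prop := ∃ a ∈ t, a.lifeline = l

/-- Weak sequencing `t ∈ t1 ;⫫ t2` of global traces : actions of `t2` may
be anticipated only when the remaining part of `t1` has no conflict on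
their lifeline. -/
inductive WeakSeq : List (Action Λ M) → List (Action Λ M) → List (Action Λ M) → Prop where
  | nilL (t : List (Action Λ M)) : WeakSeq [] t t
  | nilR (t : List (Action Λ M)) : WeakSeq t [] t
  | left {t1 t2 t : List (Action Λ M)} (a1 : Action Λ M) :
      WeakSeq t1 t2 t → WeakSeq (a1 :: t1) t2 (a1 :: t)
  | right {t1 t2 t : List (Action Λ M)} (a2 : Action Λ M) :
      ¬ conflicts t1 a2.lifeline → WeakSeq t1 t2 t → WeakSeq t1 (a2 :: t2) (a2 :: t)

/-- Projection `π_L` of a global trace onto a multi-trace. -/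
noncomputable def proj : List (Action Λ M) → MultiTrace Λ M
  | [] => MultiTrace.eps
  | a :: t => MultiTrace.prepend a (proj t)

/-- Elementwise strict sequencing on sets of multi-traces. -/
def concatSet (S1 S2 : Set (MultiTrace Λ M)) : Set (MultiTrace Λ M) :=
  {μ | ∃ μ1 ∈ S1, ∃ μ2 ∈ S2, μ = MultiTrace.concat μ1 μ2}

/-- Elementwise interleaving on sets of multi-traces. -/
def shuffleSet (S1 S2 : Set (MultiTrace Λ M)) : Set (MultiTrace Λ M) :=
  {μ | ∃ μ1 ∈ S1, ∃ μ2 ∈ S2, MTShuffle μ1 μ2 μ}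

/-- `S^{;n}`. -/
def powConcat (S : Set (MultiTrace Λ M)) : ℕ → Set (MultiTrace Λ M)
  | 0 => {MultiTrace.eps}
  | n + 1 => concatSet S (powConcat S n)

/-- Kleene closure `S^{;*}`. -/
def kleeneConcat (S : Set (MultiTrace Λ M)) : Set (MultiTrace Λ M) := ⋃ n, powConcat S n

/-- `S^{||n}`. -/
def powShuffle (S : Set (MultiTrace Λ M)) : ℕ → Set (MultiTrace Λ M)
  | 0 => {MultiTrace.eps}
  | n + 1 => shuffleSet S (powShuffle S n)

/-- Kleene closure `S^{||*}`. -/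
def kleeneShuffle (S : Set (MultiTrace Λ M)) : Set (MultiTrace Λ M) := ⋃ n, powShuffle S n

/-- The multi-trace semantics `σ_L : 𝕀(L) → 𝒫(𝕄(L))`. -/
noncomputable def sem : Interaction Λ M → Set (MultiTrace Λ M)
  | .empty => {MultiTrace.eps}
  | .act a => {MultiTrace.prepend a MultiTrace.eps}
  | .alt i1 i2 => sem i1 ∪ sem i2
  | .strict i1 i2 => concatSet (sem i1) (sem i2)
  | .seq i1 i2 => concatSet (sem i1) (sem i2)
  | .par i1 i2 => shuffleSet (sem i1) (sem i2)
  | .loopS i => kleeneConcat (sem i)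
  | .loopW i => kleeneConcat (sem i)
  | .loopP i => kleeneShuffle (sem i)

/-- Multi-prefix closure `\overline{S}` of a set of multi-traces. -/
def prefixClosure (S : Set (MultiTrace Λ M)) : Set (MultiTrace Λ M) :=
  {μ' | ∃ μ ∈ S, MultiTrace.isPrefixOf μ' μ}

/-- Termination predicate `i ↓` : `i` accepts the empty (multi-)trace. -/
inductive Terminates : Interaction Λ M → Prop where
  | empty : Terminates .empty
  | altL {i1 i2 : Interaction Λ M} : Terminates i1 → Terminates (.alt i1 i2)
  | altR {i1 i2 : Interaction Λ M} : Terminates i2 → Terminates (.alt i1 i2)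
  | strict {i1 i2 : Interaction Λ M} : Terminates i1 → Terminates i2 → Terminates (.strict i1 i2)
  | seq {i1 i2 : Interaction Λ M} : Terminates i1 → Terminates i2 → Terminates (.seq i1 i2)
  | par {i1 i2 : Interaction Λ M} : Terminates i1 → Terminates i2 → Terminates (.par i1 i2)
  | loopS (i : Interaction Λ M) : Terminates (.loopS i)
  | loopW (i : Interaction Λ M) : Terminates (.loopW i)
  | loopP (i : Interaction Λ M) : Terminates (.loopP i)

/-- Collision predicate `i ⫫̸ l` : every trace of `i` contains an action
on lifeline `l`. -/
inductive Collides : Interaction Λ M → Λ → Prop where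
  | act {a : Action Λ M} {l : Λ} : a.lifeline = l → Collides (.act a) l
  | alt {i1 i2 : Interaction Λ M} {l : Λ} :
      Collides i1 l → Collides i2 l → Collides (.alt i1 i2) l
  | strictL {i1 i2 : Interaction Λ M} {l : Λ} : Collides i1 l → Collides (.strict i1 i2) l
  | strictR {i1 i2 : Interaction Λ M} {l : Λ} : Collides i2 l → Collides (.strict i1 i2) l
  | seqL {i1 i2 : Interaction Λ M} {l : Λ} : Collides i1 l → Collides (.seq i1 i2) l
  | seqR {i1 i2 : Interaction Λ M} {l : Λ} : Collides i2 l → Collides (.seq i1 i2) l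
  | parL {i1 i2 : Interaction Λ M} {l : Λ} : Collides i1 l → Collides (.par i1 i2) l
  | parR {i1 i2 : Interaction Λ M} {l : Λ} : Collides i2 l → Collides (.par i1 i2) l

/-- Pruning relation `i ≃^⫫_l i'`. -/
inductive Prunes : Interaction Λ M → Λ → Interaction Λ M → Prop where
  | empty (l : Λ) : Prunes .empty l .empty
  | act {a : Action Λ M} {l : Λ} : a.lifeline ≠ l → Prunes (.act a) l (.act a)
  | strict {i1 i2 i1' i2' : Interaction Λ M} {l : Λ} :
      Prunes i1 l i1' → Prunes i2 l i2' → Prunes (.strict i1 i2) l (.strict i1' i2')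
  | seq {i1 i2 i1' i2' : Interaction Λ M} {l : Λ} :
      Prunes i1 l i1' → Prunes i2 l i2' → Prunes (.seq i1 i2) l (.seq i1' i2')
  | par {i1 i2 i1' i2' : Interaction Λ M} {l : Λ} :
      Prunes i1 l i1' → Prunes i2 l i2' → Prunes (.par i1 i2) l (.par i1' i2')
  | altBoth {i1 i2 i1' i2' : Interaction Λ M} {l : Λ} :
      Prunes i1 l i1' → Prunes i2 l i2' → Prunes (.alt i1 i2) l (.alt i1' i2')
  | altL {i1 i2 i1' : Interaction Λ M} {l : Λ} :
      Prunes i1 l i1' → Collides i2 l → Prunes (.alt i1 i2) l i1'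
  | altR {i1 i2 i2' : Interaction Λ M} {l : Λ} :
      Prunes i2 l i2' → Collides i1 l → Prunes (.alt i1 i2) l i2'
  | loopS {i1 i1' : Interaction Λ M} {l : Λ} :
      Prunes i1 l i1' → Prunes (.loopS i1) l (.loopS i1')
  | loopW {i1 i1' : Interaction Λ M} {l : Λ} :
      Prunes i1 l i1' → Prunes (.loopW i1) l (.loopW i1')
  | loopP {i1 i1' : Interaction Λ M} {l : Λ} :
      Prunes i1 l i1' → Prunes (.loopP i1) l (.loopP i1')
  | loopSElim {i1 : Interaction Λ M} {l : Λ} : Collides i1 l → Prunes (.loopS i1) l .empty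
  | loopWElim {i1 : Interaction Λ M} {l : Λ} : Collides i1 l → Prunes (.loopW i1) l .empty
  | loopPElim {i1 : Interaction Λ M} {l : Λ} : Collides i1 l → Prunes (.loopP i1) l .empty

/-- Execution relation `i →[a@p] i'` of the structural operational
semantics (positions over `{1,2}` encoded by `false`/`true`). -/
inductive Executes : Interaction Λ M → Action Λ M → List Bool → Interaction Λ M → Prop where
  | act (a : Action Λ M) : Executes (.act a) a [] .empty
  | altL {i1 i1' : Interaction Λ M} {a : Action Λ M} {p : List Bool} (i2 : Interaction Λ M) :
      Executes i1 a p i1' → Executes (.alt i1 i2) a (false :: p) i1'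
  | altR {i2 i2' : Interaction Λ M} {a : Action Λ M} {p : List Bool} (i1 : Interaction Λ M) :
      Executes i2 a p i2' → Executes (.alt i1 i2) a (true :: p) i2'
  | parL {i1 i1' : Interaction Λ M} {a : Action Λ M} {p : List Bool} (i2 : Interaction Λ M) :
      Executes i1 a p i1' → Executes (.par i1 i2) a (false :: p) (.par i1' i2)
  | parR {i2 i2' : Interaction Λ M} {a : Action Λ M} {p : List Bool} (i1 : Interaction Λ M) :
      Executes i2 a p i2' → Executes (.par i1 i2) a (true :: p) (.par i1 i2')
  | strictL {i1 i1' : Interaction Λ M} {a : Action Λ M} {p : List Bool} (i2 : Interaction Λ M) :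
      Executes i1 a p i1' → Executes (.strict i1 i2) a (false :: p) (.strict i1' i2)
  | strictR {i1 i2 i2' : Interaction Λ M} {a : Action Λ M} {p : List Bool} :
      Terminates i1 → Executes i2 a p i2' → Executes (.strict i1 i2) a (true :: p) i2'
  | seqL {i1 i1' : Interaction Λ M} {a : Action Λ M} {p : List Bool} (i2 : Interaction Λ M) :
      Executes i1 a p i1' → Executes (.seq i1 i2) a (false :: p) (.seq i1' i2)
  | seqR {i1 i1' i2 i2' : Interaction Λ M} {a : Action Λ M} {p : List Bool} :
      Prunes i1 a.lifeline i1' → Executes i2 a p i2' →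
      Executes (.seq i1 i2) a (true :: p) (.seq i1' i2')
  | loopS {i1 i1' : Interaction Λ M} {a : Action Λ M} {p : List Bool} :
      Executes i1 a p i1' → Executes (.loopS i1) a (false :: p) (.strict i1' (.loopS i1))
  | loopW {i1 i1' i'' : Interaction Λ M} {a : Action Λ M} {p : List Bool} :
      Executes i1 a p i1' → Prunes (.loopW i1) a.lifeline i'' →
      Executes (.loopW i1) a (false :: p) (.seq i'' (.seq i1' (.loopW i1)))
  | loopP {i1 i1' : Interaction Λ M} {a : Action Λ M} {p : List Bool} :
      Executes i1 a p i1' → Executes (.loopP i1) a (false :: p) (.par i1' (.loopP i1))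

/-- Vertices of the analysis graph : `Ok` or a pair of an interaction and a
multi-trace over a current set of lifelines `L`. -/
inductive Vertex (Λ M : Type) : Type where
  | ok : Vertex Λ M
  | node : Set Λ → Interaction Λ M → MultiTrace Λ M → Vertex Λ M

/-- Rule `⤳_o` : emission of the `Ok` verdict on an empty multi-trace. -/
inductive StepOk : Vertex Λ M → Vertex Λ M → Prop where
  | mk (L : Set Λ) (i : Interaction Λ M) :
      StepOk (.node L i MultiTrace.eps) .ok

/-- Rule `⤳_r` : removal of a set `H` of lifelines (with `∅ ⊊ H ⊊ L`)
whose components are all empty. -/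
inductive StepRmv : Vertex Λ M → Vertex Λ M → Prop where
  | mk (L H : Set Λ) (i : Interaction Λ M) (μ : MultiTrace Λ M) :
      H.Nonempty → H ⊂ L → (∀ l ∈ H, μ l = []) →
      StepRmv (.node L i μ) (.node (L \ H) (rmv H i) (MultiTrace.rmv H μ))

/-- Rule `⤳_e` : simultaneous consumption of the action at the head of a
component of the multi-trace and execution of a matching action of the
interaction. -/
inductive StepExec : Vertex Λ M → Vertex Λ M → Prop where
  | mk (L : Set Λ) (i i' : Interaction Λ M) (a : Action Λ M) (p : List Bool)
      (μ : MultiTrace Λ M) :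
      a.lifeline ∈ L → Executes i a p i' →
      StepExec (.node L i (MultiTrace.prepend a μ)) (.node L i' μ)

/-- The transition relation `⤳` of the analysis graph. -/
def Step (v w : Vertex Λ M) : Prop := StepOk v w ∨ StepRmv v w ∨ StepExec v w

/-- One-unambiguity `a ⊑1∈ i` : in the projection of `i` onto `θ(a)`,
there is a unique position at which `a` is immediately executable. -/
def OneUnambiguous (L : Set Λ) (a : Action Λ M) (i : Interaction Λ M) : Prop :=
  ∃! p : List Bool, ∃ i'' : Interaction Λ M, Executes (rmv (L \ {a.lifeline}) i) a p i''

/-- A local trace on lifeline `l` viewed as a multi-trace over `{l}`. -/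
noncomputable def localMT (l : Λ) (w : List (Action Λ M)) : MultiTrace Λ M :=
  fun l' => if l' = l then w else []

/-- Right-nested `seq`-composition of a list of interactions (`∅` for the
empty list). -/
def seqComp : List (Interaction Λ M) → Interaction Λ M
  | [] => .empty
  | [i] => i
  | i :: rest => .seq i (seqComp rest)

/-- The operational trace semantics `σ_op(i)` generated by the two rules
`i↓ ⟹ ε ∈ σ_op(i)` and `i →[a@p] i' ∧ t ∈ σ_op(i') ⟹ a.t ∈ σ_op(i)`. -/
inductive OpTrace : Interaction Λ M → List (Action Λ M) → Prop where
  | empty {i : Interaction Λ M} : Terminates i → OpTrace i []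
  | step {i i' : Interaction Λ M} {a : Action Λ M} {p : List Bool} {t : List (Action Λ M)} :
      Executes i a p i' → OpTrace i' t → OpTrace i (a :: t)

end RV

/-!
Along a successful run of the analysis graph the following invariant holds: for every lifeline
`l`, the component `μ l` is a prefix of a trace of the projection `rmv (L \ {l}) i`.
Executing an action on `l` is mirrored by the projection. Executing an action on another
lifeline can only shrink the set of traces of the projection: the executed action becomes `∅`,
and the pruned or partly consumed subterms left behind only have traces of the subterms they
come from. On a single lifeline weak sequencing is strict sequencing, which is what makes `seq`
and `loopW` tractable. Finally, a prefix of a trace of the projection can be replayed action by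
action by the local analysis, which then emits `Ok`.
-/

namespace RV

variable {Λ M : Type}

section Lifelines

theorem Interaction.lifelinesIn.mono {S T : Set Λ} (hST : S ⊆ T) {i : Interaction Λ M}
    (hi : i.lifelinesIn S) : i.lifelinesIn T := by
  induction i with
  | act a => exact hST hi
  | _ => simp_all [Interaction.lifelinesIn]

theorem Prunes.lifelinesIn {S : Set Λ} {i i' : Interaction Λ M} {l : Λ} (h : Prunes i l i')
    (hi : i.lifelinesIn S) : i'.lifelinesIn S := by
  induction h <;> simp_all [Interaction.lifelinesIn]

theorem Executes.lifelinesIn {S : Set Λ} {i i' : Interaction Λ M} {a : Action Λ M}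
    {p : List Bool} (h : Executes i a p i') (hi : i.lifelinesIn S) : i'.lifelinesIn S := by
  induction h with
  | seqR hp _ ih => exact ⟨hp.lifelinesIn hi.1, ih hi.2⟩
  | loopW _ hp ih => exact ⟨hp.lifelinesIn hi, ih hi, hi⟩
  | _ => simp_all [Interaction.lifelinesIn]

theorem Executes.lifeline_mem {S : Set Λ} {i i' : Interaction Λ M} {a : Action Λ M}
    {p : List Bool} (h : Executes i a p i') (hi : i.lifelinesIn S) : a.lifeline ∈ S := by
  induction h <;> simp_all [Interaction.lifelinesIn]

theorem Interaction.lifelinesIn.rmv {L : Set Λ} (H : Set Λ) {i : Interaction Λ M}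
    (hi : i.lifelinesIn L) : (RV.rmv H i).lifelinesIn (L \ H) := by
  induction i with
  | act a =>
    unfold RV.rmv
    split_ifs with h
    exacts [trivial, ⟨hi, h⟩]
  | _ => simp_all [RV.rmv, Interaction.lifelinesIn]

theorem Interaction.lifelinesIn.rmv_singleton {H : Set Λ} {l : Λ} {i : Interaction Λ M}
    (hi : i.lifelinesIn (H ∪ {l})) : (RV.rmv H i).lifelinesIn {l} :=
  (hi.rmv H).mono (by rw [Set.union_sdiff_left]; exact Set.sdiff_subset)

theorem Interaction.lifelinesIn.terminates {i : Interaction Λ M} (hi : i.lifelinesIn ∅) :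
    Terminates i := by
  induction i with
  | act a => exact hi.elim
  | loopS i => exact .loopS i
  | loopW i => exact .loopW i
  | loopP i => exact .loopP i
  | alt _ _ ih _ => exact .altL (ih hi.1)
  | _ => constructor <;> simp_all [Interaction.lifelinesIn]

theorem Prunes.lifelinesIn_empty {i i' : Interaction Λ M} {l : Λ} (h : Prunes i l i')
    (hi : i.lifelinesIn {l}) : i'.lifelinesIn ∅ := by
  induction h <;> simp_all [Interaction.lifelinesIn]

end Lifelines

section Projection

theorem rmv_rmv (H H' : Set Λ) (i : Interaction Λ M) : rmv H' (rmv H i) = rmv (H ∪ H') i := by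
  induction i with
  | act a => by_cases h : a.lifeline ∈ H <;> by_cases h' : a.lifeline ∈ H' <;> simp [rmv, h, h']
  | _ => simp_all [rmv]

theorem Terminates.rmv (H : Set Λ) {i : Interaction Λ M} (h : Terminates i) :
    Terminates (RV.rmv H i) := by
  induction h with
  | altL _ ih => exact .altL ih
  | altR _ ih => exact .altR ih
  | _ => constructor <;> assumption

theorem Collides.rmv {H : Set Λ} {i : Interaction Λ M} {l : Λ} (h : Collides i l)
    (hl : l ∉ H) : Collides (RV.rmv H i) l := by
  induction h with
  | act ha =>
    subst ha
    simpa [RV.rmv, hl] using Collides.act rfl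
  | alt _ _ ih1 ih2 => exact .alt (ih1 hl) (ih2 hl)
  | strictL _ ih => exact .strictL (ih hl)
  | strictR _ ih => exact .strictR (ih hl)
  | seqL _ ih => exact .seqL (ih hl)
  | seqR _ ih => exact .seqR (ih hl)
  | parL _ ih => exact .parL (ih hl)
  | parR _ ih => exact .parR (ih hl)

theorem Prunes.rmv {H : Set Λ} {i i' : Interaction Λ M} {l : Λ} (h : Prunes i l i')
    (hl : l ∉ H) : Prunes (RV.rmv H i) l (RV.rmv H i') := by
  induction h with
  | empty => exact .empty _
  | @act a l ha =>
    by_cases hm : a.lifeline ∈ H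
    · simpa [RV.rmv, hm] using Prunes.empty l
    · simpa [RV.rmv, hm] using Prunes.act ha
  | strict _ _ ih1 ih2 => exact .strict (ih1 hl) (ih2 hl)
  | seq _ _ ih1 ih2 => exact .seq (ih1 hl) (ih2 hl)
  | par _ _ ih1 ih2 => exact .par (ih1 hl) (ih2 hl)
  | altBoth _ _ ih1 ih2 => exact .altBoth (ih1 hl) (ih2 hl)
  | altL _ hc ih => exact .altL (ih hl) (hc.rmv hl)
  | altR _ hc ih => exact .altR (ih hl) (hc.rmv hl)
  | loopS _ ih => exact .loopS (ih hl)
  | loopW _ ih => exact .loopW (ih hl)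
  | loopP _ ih => exact .loopP (ih hl)
  | loopSElim hc => exact .loopSElim (hc.rmv hl)
  | loopWElim hc => exact .loopWElim (hc.rmv hl)
  | loopPElim hc => exact .loopPElim (hc.rmv hl)

theorem Executes.rmv {H : Set Λ} {i i' : Interaction Λ M} {a : Action Λ M} {p : List Bool}
    (h : Executes i a p i') (ha : a.lifeline ∉ H) : Executes (RV.rmv H i) a p (RV.rmv H i') := by
  induction h with
  | act a => simpa [RV.rmv, ha] using Executes.act a
  | altL _ _ ih => exact .altL _ (ih ha)
  | altR _ _ ih => exact .altR _ (ih ha)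
  | parL _ _ ih => exact .parL _ (ih ha)
  | parR _ _ ih => exact .parR _ (ih ha)
  | strictL _ _ ih => exact .strictL _ (ih ha)
  | strictR ht _ ih => exact .strictR (ht.rmv H) (ih ha)
  | seqL _ _ ih => exact .seqL _ (ih ha)
  | seqR hp _ ih => exact .seqR (hp.rmv ha) (ih ha)
  | loopS _ ih => exact .loopS (ih ha)
  | loopW _ hp ih => exact .loopW (ih ha) (hp.rmv ha)
  | loopP _ ih => exact .loopP (ih ha)

end Projection

section Pruning

theorem prunes_or_collides (i : Interaction Λ M) (l : Λ) :
    (∃ i', Prunes i l i') ∨ Collides i l := by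
  induction i with
  | empty => exact .inl ⟨_, .empty l⟩
  | act a =>
    by_cases h : a.lifeline = l
    exacts [.inr (.act h), .inl ⟨_, .act h⟩]
  | strict _ _ ih1 ih2 =>
    rcases ih1 with ⟨_, h1⟩ | c1
    · rcases ih2 with ⟨_, h2⟩ | c2
      exacts [.inl ⟨_, .strict h1 h2⟩, .inr (.strictR c2)]
    · exact .inr (.strictL c1)
  | seq _ _ ih1 ih2 =>
    rcases ih1 with ⟨_, h1⟩ | c1
    · rcases ih2 with ⟨_, h2⟩ | c2
      exacts [.inl ⟨_, .seq h1 h2⟩, .inr (.seqR c2)]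
    · exact .inr (.seqL c1)
  | par _ _ ih1 ih2 =>
    rcases ih1 with ⟨_, h1⟩ | c1
    · rcases ih2 with ⟨_, h2⟩ | c2
      exacts [.inl ⟨_, .par h1 h2⟩, .inr (.parR c2)]
    · exact .inr (.parL c1)
  | alt _ _ ih1 ih2 =>
    rcases ih1 with ⟨_, h1⟩ | c1 <;> rcases ih2 with ⟨_, h2⟩ | c2
    exacts [.inl ⟨_, .altBoth h1 h2⟩, .inl ⟨_, .altL h1 c2⟩, .inl ⟨_, .altR h2 c1⟩,
      .inr (.alt c1 c2)]
  | loopS _ ih =>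
    rcases ih with ⟨_, h⟩ | c
    exacts [.inl ⟨_, .loopS h⟩, .inl ⟨_, .loopSElim c⟩]
  | loopW _ ih =>
    rcases ih with ⟨_, h⟩ | c
    exacts [.inl ⟨_, .loopW h⟩, .inl ⟨_, .loopWElim c⟩]
  | loopP _ ih =>
    rcases ih with ⟨_, h⟩ | c
    exacts [.inl ⟨_, .loopP h⟩, .inl ⟨_, .loopPElim c⟩]

theorem Terminates.exists_prunes {i : Interaction Λ M} (h : Terminates i) (l : Λ) :
    ∃ i', Prunes i l i' ∧ Terminates i' := by
  induction h with
  | empty => exact ⟨_, .empty l, .empty⟩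
  | @altL i1 i2 _ ih =>
    obtain ⟨_, hp1, ht1⟩ := ih
    rcases prunes_or_collides i2 l with ⟨_, hp2⟩ | c2
    exacts [⟨_, .altBoth hp1 hp2, .altL ht1⟩, ⟨_, .altL hp1 c2, ht1⟩]
  | @altR i1 i2 _ ih =>
    obtain ⟨_, hp2, ht2⟩ := ih
    rcases prunes_or_collides i1 l with ⟨_, hp1⟩ | c1
    exacts [⟨_, .altBoth hp1 hp2, .altR ht2⟩, ⟨_, .altR hp2 c1, ht2⟩]
  | strict _ _ ih1 ih2 =>
    obtain ⟨⟨_, hp1, ht1⟩, ⟨_, hp2, ht2⟩⟩ := And.intro ih1 ih2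
    exact ⟨_, .strict hp1 hp2, .strict ht1 ht2⟩
  | seq _ _ ih1 ih2 =>
    obtain ⟨⟨_, hp1, ht1⟩, ⟨_, hp2, ht2⟩⟩ := And.intro ih1 ih2
    exact ⟨_, .seq hp1 hp2, .seq ht1 ht2⟩
  | par _ _ ih1 ih2 =>
    obtain ⟨⟨_, hp1, ht1⟩, ⟨_, hp2, ht2⟩⟩ := And.intro ih1 ih2
    exact ⟨_, .par hp1 hp2, .par ht1 ht2⟩
  | loopS i =>
    rcases prunes_or_collides i l with ⟨_, h⟩ | c
    exacts [⟨_, .loopS h, .loopS _⟩, ⟨_, .loopSElim c, .empty⟩]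
  | loopW i =>
    rcases prunes_or_collides i l with ⟨_, h⟩ | c
    exacts [⟨_, .loopW h, .loopW _⟩, ⟨_, .loopWElim c, .empty⟩]
  | loopP i =>
    rcases prunes_or_collides i l with ⟨_, h⟩ | c
    exacts [⟨_, .loopP h, .loopP _⟩, ⟨_, .loopPElim c, .empty⟩]

theorem Prunes.terminates {i i' : Interaction Λ M} {l : Λ} (h : Prunes i l i')
    (ht : Terminates i') : Terminates i := by
  induction h with
  | strict _ _ ih1 ih2 => cases ht with | strict h1 h2 => exact .strict (ih1 h1) (ih2 h2)
  | seq _ _ ih1 ih2 => cases ht with | seq h1 h2 => exact .seq (ih1 h1) (ih2 h2)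
  | par _ _ ih1 ih2 => cases ht with | par h1 h2 => exact .par (ih1 h1) (ih2 h2)
  | altBoth _ _ ih1 ih2 =>
    cases ht with
    | altL h1 => exact .altL (ih1 h1)
    | altR h2 => exact .altR (ih2 h2)
  | altL _ _ ih => exact .altL (ih ht)
  | altR _ _ ih => exact .altR (ih ht)
  | empty | act => exact ht
  | _ => constructor

end Pruning

section Shuffle

variable {α : Type}

theorem ListShuffle.nil_left : ∀ v : List α, ListShuffle [] v v
  | [] => .nil
  | a :: v => .right a (nil_left v)

theorem ListShuffle.append : ∀ u v : List α, ListShuffle u v (u ++ v)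
  | [], v => nil_left v
  | a :: u, v => .left a (append u v)

theorem ListShuffle.symm {u v t : List α} (h : ListShuffle u v t) : ListShuffle v u t := by
  induction h with
  | nil => exact .nil
  | left a _ ih => exact .right a ih
  | right a _ ih => exact .left a ih

theorem ListShuffle.length_eq {u v t : List α} (h : ListShuffle u v t) :
    t.length = u.length + v.length := by
  induction h with
  | nil => rfl
  | left _ _ ih | right _ _ ih => simp only [List.length_cons, ih]; omega

theorem ListShuffle.assoc {x y s z t : List α} (hs : ListShuffle x y s)
    (ht : ListShuffle s z t) : ∃ w, ListShuffle y z w ∧ ListShuffle x w t := by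
  induction ht generalizing x y with
  | nil => cases hs; exact ⟨[], .nil, .nil⟩
  | left a _ ih =>
    cases hs with
    | left _ hs =>
      obtain ⟨w, hw, hw'⟩ := ih hs
      exact ⟨w, hw, .left a hw'⟩
    | right _ hs =>
      obtain ⟨w, hw, hw'⟩ := ih hs
      exact ⟨a :: w, .left a hw, .right a hw'⟩
  | right a _ ih =>
    obtain ⟨w, hw, hw'⟩ := ih hs
    exact ⟨a :: w, .right a hw, .right a hw'⟩

end Shuffle

section Traces

def Interaction.traces (i : Interaction Λ M) : Set (List (Action Λ M)) := {t | OpTrace i t}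

variable {A A' B B' : Interaction Λ M} {t u v : List (Action Λ M)}

theorem opTrace_nil_iff {i : Interaction Λ M} : OpTrace i [] ↔ Terminates i :=
  ⟨fun | .empty h => h, .empty⟩

theorem opTrace_cons_iff {i : Interaction Λ M} {a : Action Λ M} :
    OpTrace i (a :: t) ↔ ∃ p i', Executes i a p i' ∧ OpTrace i' t :=
  ⟨fun | .step hex h => ⟨_, _, hex, h⟩, fun ⟨_, _, hex, h⟩ => .step hex h⟩

theorem OpTrace.eq_nil {i : Interaction Λ M} (hi : i.lifelinesIn ∅) (h : OpTrace i t) :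
    t = [] := by
  cases h with
  | empty => rfl
  | step hex => exact absurd (hex.lifeline_mem hi) (Set.notMem_empty _)

theorem traces_empty : (Interaction.empty : Interaction Λ M).traces = {[]} :=
  Set.eq_singleton_iff_unique_mem.2 ⟨.empty .empty, fun _ => OpTrace.eq_nil trivial⟩

theorem traces_empty_subset {i : Interaction Λ M} (h : Terminates i) :
    (Interaction.empty : Interaction Λ M).traces ⊆ i.traces := by
  rw [traces_empty, Set.singleton_subset_iff]
  exact .empty h

theorem traces_alt : (Interaction.alt A B).traces = A.traces ∪ B.traces := by
  ext t
  change OpTrace _ t ↔ OpTrace A t ∨ OpTrace B t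
  constructor
  · rintro (⟨ht⟩ | ⟨hex, h⟩)
    · cases ht with
      | altL ht => exact .inl (.empty ht)
      | altR ht => exact .inr (.empty ht)
    · cases hex with
      | altL _ hex => exact .inl (.step hex h)
      | altR _ hex => exact .inr (.step hex h)
  · rintro ((⟨h⟩ | ⟨hex, h⟩) | (⟨h⟩ | ⟨hex, h⟩))
    exacts [.empty (.altL h), .step (.altL B hex) h, .empty (.altR h), .step (.altR A hex) h]

theorem traces_alt_mono (hA : A.traces ⊆ A'.traces) (hB : B.traces ⊆ B'.traces) :
    (Interaction.alt A B).traces ⊆ (Interaction.alt A' B').traces := by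
  rw [traces_alt, traces_alt]
  exact Set.union_subset_union hA hB

theorem OpTrace.strict (hA : OpTrace A u) (hB : OpTrace B v) : OpTrace (.strict A B) (u ++ v) := by
  induction hA with
  | empty hA =>
    cases hB with
    | empty hB => exact .empty (.strict hA hB)
    | step hex h => exact .step (.strictR hA hex) h
  | step hex _ ih => exact .step (.strictL _ hex) ih

theorem opTrace_strict_iff :
    OpTrace (.strict A B) t ↔ ∃ u v, OpTrace A u ∧ OpTrace B v ∧ u ++ v = t := by
  refine ⟨fun h => ?_, fun ⟨u, v, hu, hv, h⟩ => h ▸ hu.strict hv⟩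
  generalize hj : Interaction.strict A B = j at h
  induction h generalizing A with
  | empty ht =>
    subst hj
    cases ht with | strict h1 h2 => exact ⟨[], [], .empty h1, .empty h2, rfl⟩
  | step hex htr ih =>
    subst hj
    cases hex with
    | strictL _ hex =>
      obtain ⟨u, v, hu, hv, rfl⟩ := ih rfl
      exact ⟨_, v, .step hex hu, hv, rfl⟩
    | strictR ht hex => exact ⟨[], _, .empty ht, .step hex htr, rfl⟩

theorem traces_strict_mono (hA : A.traces ⊆ A'.traces) (hB : B.traces ⊆ B'.traces) :
    (Interaction.strict A B).traces ⊆ (Interaction.strict A' B').traces := by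
  intro t ht
  obtain ⟨u, v, hu, hv, rfl⟩ := opTrace_strict_iff.1 ht
  exact (hA hu).strict (hB hv)

theorem traces_subset_strict (hA : Terminates A) : B.traces ⊆ (Interaction.strict A B).traces :=
  fun _ h => (OpTrace.empty hA).strict h

theorem OpTrace.seq_of_terminates (hA : Terminates A) (hB : OpTrace B v) :
    OpTrace (.seq A B) v := by
  induction hB generalizing A with
  | empty hB => exact .empty (.seq hA hB)
  | @step _ _ a _ _ hex _ ih =>
    obtain ⟨A', hp, hA'⟩ := hA.exists_prunes a.lifeline
    exact .step (.seqR hp hex) (ih hA')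

theorem OpTrace.seq (hA : OpTrace A u) (hB : OpTrace B v) : OpTrace (.seq A B) (u ++ v) := by
  induction hA with
  | empty hA => exact hB.seq_of_terminates hA
  | step hex _ ih => exact .step (.seqL _ hex) ih

/-- On a single lifeline, `seq` behaves as `strict`: an action of the right operand can only be
executed once the left one has been pruned down to an interaction without actions. -/
theorem opTrace_seq_iff {l : Λ} (hA : A.lifelinesIn {l}) (hB : B.lifelinesIn {l}) :
    OpTrace (.seq A B) t ↔ ∃ u v, OpTrace A u ∧ OpTrace B v ∧ u ++ v = t := by
  refine ⟨fun h => ?_, fun ⟨u, v, hu, hv, h⟩ => h ▸ hu.seq hv⟩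
  generalize hj : Interaction.seq A B = j at h
  induction h generalizing A B with
  | empty ht =>
    subst hj
    cases ht with | seq h1 h2 => exact ⟨[], [], .empty h1, .empty h2, rfl⟩
  | step hex htr ih =>
    subst hj
    cases hex with
    | seqL _ hex =>
      obtain ⟨u, v, hu, hv, rfl⟩ := ih (hex.lifelinesIn hA) hB rfl
      exact ⟨_, v, .step hex hu, hv, rfl⟩
    | seqR hp hex =>
      have hA' := hp.lifelinesIn_empty (hex.lifeline_mem hB ▸ hA)
      obtain ⟨u, v, hu, hv, rfl⟩ := ih (hp.lifelinesIn hA) (hex.lifelinesIn hB) rfl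
      obtain rfl := hu.eq_nil hA'
      exact ⟨[], _, .empty (hp.terminates hA'.terminates), .step hex hv, rfl⟩

theorem traces_seq_mono {l : Λ} (hA : A.lifelinesIn {l}) (hB : B.lifelinesIn {l})
    (hAA' : A.traces ⊆ A'.traces) (hBB' : B.traces ⊆ B'.traces) :
    (Interaction.seq A B).traces ⊆ (Interaction.seq A' B').traces := by
  intro t ht
  obtain ⟨u, v, hu, hv, rfl⟩ := (opTrace_seq_iff hA hB).1 ht
  exact (hAA' hu).seq (hBB' hv)

theorem OpTrace.par (hA : OpTrace A u) (hB : OpTrace B v) (hsh : ListShuffle u v t) :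
    OpTrace (.par A B) t := by
  induction hsh generalizing A B with
  | nil => exact .empty (.par (opTrace_nil_iff.1 hA) (opTrace_nil_iff.1 hB))
  | left a _ ih =>
    obtain ⟨_, _, hex, hA⟩ := opTrace_cons_iff.1 hA
    exact .step (.parL _ hex) (ih hA hB)
  | right a _ ih =>
    obtain ⟨_, _, hex, hB⟩ := opTrace_cons_iff.1 hB
    exact .step (.parR _ hex) (ih hA hB)

theorem opTrace_par_iff :
    OpTrace (.par A B) t ↔ ∃ u v, OpTrace A u ∧ OpTrace B v ∧ ListShuffle u v t := by
  refine ⟨fun h => ?_, fun ⟨u, v, hu, hv, h⟩ => hu.par hv h⟩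
  generalize hj : Interaction.par A B = j at h
  induction h generalizing A B with
  | empty ht =>
    subst hj
    cases ht with | par h1 h2 => exact ⟨[], [], .empty h1, .empty h2, .nil⟩
  | step hex htr ih =>
    subst hj
    cases hex with
    | parL _ hex =>
      obtain ⟨u, v, hu, hv, hsh⟩ := ih rfl
      exact ⟨_, v, .step hex hu, hv, .left _ hsh⟩
    | parR _ hex =>
      obtain ⟨u, v, hu, hv, hsh⟩ := ih rfl
      exact ⟨u, _, hu, .step hex hv, .right _ hsh⟩

theorem traces_par_mono (hA : A.traces ⊆ A'.traces) (hB : B.traces ⊆ B'.traces) :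
    (Interaction.par A B).traces ⊆ (Interaction.par A' B').traces := by
  intro t ht
  obtain ⟨u, v, hu, hv, hsh⟩ := opTrace_par_iff.1 ht
  exact (hA hu).par (hB hv) hsh

theorem Interaction.traces_nonempty (i : Interaction Λ M) : i.traces.Nonempty := by
  induction i with
  | empty => exact ⟨[], OpTrace.empty .empty⟩
  | act a => exact ⟨[a], OpTrace.step (.act a) (.empty .empty)⟩
  | loopS i => exact ⟨[], OpTrace.empty (.loopS i)⟩
  | loopW i => exact ⟨[], OpTrace.empty (.loopW i)⟩
  | loopP i => exact ⟨[], OpTrace.empty (.loopP i)⟩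
  | strict _ _ ih1 ih2 => exact ⟨_, ih1.some_mem.strict ih2.some_mem⟩
  | seq _ _ ih1 ih2 => exact ⟨_, ih1.some_mem.seq ih2.some_mem⟩
  | par _ _ ih1 ih2 => exact ⟨_, ih1.some_mem.par ih2.some_mem (ListShuffle.append _ _)⟩
  | alt _ _ ih1 _ => exact ih1.mono (traces_alt ▸ Set.subset_union_left)

end Traces

section Loops

variable {A B : Interaction Λ M} {t u v : List (Action Λ M)}

theorem OpTrace.loopS_append (hu : OpTrace A u) (hv : OpTrace (.loopS A) v) :
    OpTrace (.loopS A) (u ++ v) := by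
  cases hu with
  | empty => exact hv
  | step hex hu => exact .step (.loopS hex) (hu.strict hv)

theorem opTrace_loopS_cons_iff {b : Action Λ M} : OpTrace (.loopS A) (b :: t) ↔
    ∃ u v, OpTrace A (b :: u) ∧ OpTrace (.loopS A) v ∧ u ++ v = t := by
  refine ⟨fun h => ?_, fun ⟨u, v, hu, hv, h⟩ => h ▸ hu.loopS_append hv⟩
  obtain ⟨_, _, hex, h⟩ := opTrace_cons_iff.1 h
  cases hex with | loopS hex => ?_
  obtain ⟨u, v, hu, hv, rfl⟩ := opTrace_strict_iff.1 h
  exact ⟨u, v, .step hex hu, hv, rfl⟩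

theorem OpTrace.loopS_mono (h : A.traces ⊆ B.traces) :
    ∀ {t}, OpTrace (.loopS A) t → OpTrace (.loopS B) t
  | [], _ => .empty (.loopS B)
  | _ :: _, ht => by
    obtain ⟨u, v, hu, hv, rfl⟩ := opTrace_loopS_cons_iff.1 ht
    exact (h hu).loopS_append (hv.loopS_mono h)
termination_by t => t.length
decreasing_by subst_vars; simp

theorem OpTrace.loopW_append (hu : OpTrace A u) (hv : OpTrace (.loopW A) v) :
    OpTrace (.loopW A) (u ++ v) := by
  cases hu with
  | empty => exact hv
  | @step _ _ b _ _ hex hu =>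
    obtain ⟨P, hP, hPt⟩ := (Terminates.loopW A).exists_prunes b.lifeline
    exact .step (.loopW hex hP) ((hu.seq hv).seq_of_terminates hPt)

theorem opTrace_loopW_cons_iff {l : Λ} {b : Action Λ M} (hA : A.lifelinesIn {l}) :
    OpTrace (.loopW A) (b :: t) ↔
      ∃ u v, OpTrace A (b :: u) ∧ OpTrace (.loopW A) v ∧ u ++ v = t := by
  refine ⟨fun h => ?_, fun ⟨u, v, hu, hv, h⟩ => h ▸ hu.loopW_append hv⟩
  obtain ⟨_, _, hex, h⟩ := opTrace_cons_iff.1 h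
  cases hex with | loopW hex hP => ?_
  have hA' : A.lifelinesIn {b.lifeline} := hex.lifeline_mem hA ▸ hA
  obtain ⟨t₀, _, h₀, hrest, rfl⟩ :=
    (opTrace_seq_iff (B := .seq _ (.loopW A)) (hP.lifelinesIn hA) ⟨hex.lifelinesIn hA, hA⟩).1 h
  obtain rfl := h₀.eq_nil (hP.lifelinesIn_empty hA')
  obtain ⟨u, v, hu, hv, rfl⟩ :=
    (opTrace_seq_iff (B := .loopW A) (hex.lifelinesIn hA) hA).1 hrest
  exact ⟨u, v, .step hex hu, hv, rfl⟩

theorem OpTrace.loopW_append_loopW {l : Λ} (hA : A.lifelinesIn {l}) :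
    ∀ {t}, OpTrace (.loopW A) t → OpTrace (.loopW A) v → OpTrace (.loopW A) (t ++ v)
  | [], _, hv => hv
  | _ :: _, ht, hv => by
    obtain ⟨u, w, hu, hw, rfl⟩ := (opTrace_loopW_cons_iff hA).1 ht
    simpa using hu.loopW_append (hw.loopW_append_loopW hA hv)
termination_by t => t.length
decreasing_by subst_vars; simp

theorem OpTrace.loopW_mono {l : Λ} (hA : A.lifelinesIn {l}) (h : A.traces ⊆ B.traces) :
    ∀ {t}, OpTrace (.loopW A) t → OpTrace (.loopW B) t
  | [], _ => .empty (.loopW B)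
  | _ :: _, ht => by
    obtain ⟨u, v, hu, hv, rfl⟩ := (opTrace_loopW_cons_iff hA).1 ht
    exact (h hu).loopW_append (hv.loopW_mono hA h)
termination_by t => t.length
decreasing_by subst_vars; simp

theorem opTrace_loopP_cons_iff {b : Action Λ M} : OpTrace (.loopP A) (b :: t) ↔
    ∃ u v, OpTrace A (b :: u) ∧ OpTrace (.loopP A) v ∧ ListShuffle u v t := by
  constructor
  · intro h
    obtain ⟨_, _, hex, h⟩ := opTrace_cons_iff.1 h
    cases hex with | loopP hex => ?_
    obtain ⟨u, v, hu, hv, hsh⟩ := opTrace_par_iff.1 h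
    exact ⟨u, v, .step hex hu, hv, hsh⟩
  · rintro ⟨u, v, hu, hv, hsh⟩
    obtain ⟨_, _, hex, hu⟩ := opTrace_cons_iff.1 hu
    exact .step (.loopP hex) (hu.par hv hsh)

/-- When the first action comes from the loop, the shuffle is reassociated so as to recurse on a
shorter loop trace. -/
theorem OpTrace.loopP_shuffle {u v t : List (Action Λ M)} (hu : OpTrace A u)
    (hv : OpTrace (.loopP A) v) (hsh : ListShuffle u v t) : OpTrace (.loopP A) t := by
  cases hsh with
  | nil => exact hv
  | left b hsh => exact opTrace_loopP_cons_iff.2 ⟨_, _, hu, hv, hsh⟩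
  | right b hsh =>
    obtain ⟨v₁, v₂, hv₁, hv₂, hsh₁⟩ := opTrace_loopP_cons_iff.1 hv
    obtain ⟨w, hw, hsh'⟩ := hsh₁.assoc hsh.symm
    have hw' := OpTrace.loopP_shuffle hu hv₂ hw.symm
    exact opTrace_loopP_cons_iff.2 ⟨v₁, w, hv₁, hw', hsh'⟩
termination_by v.length
decreasing_by subst_vars; have := hsh₁.length_eq; simp; omega

theorem OpTrace.loopP_mono (h : A.traces ⊆ B.traces) :
    ∀ {t}, OpTrace (.loopP A) t → OpTrace (.loopP B) t
  | [], _ => .empty (.loopP B)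
  | _ :: _, ht => by
    obtain ⟨u, v, hu, hv, hsh⟩ := opTrace_loopP_cons_iff.1 ht
    exact (h hu).loopP_shuffle (hv.loopP_mono h) (.left _ hsh)
termination_by t => t.length
decreasing_by have := hsh.length_eq; simp; omega

end Loops

section ProjectedTraces

variable {H : Set Λ} {l : Λ}

/-- Pruning, with respect to any lifeline, only discards alternatives and iterations. -/
theorem Prunes.traces_rmv_subset {l' : Λ} {i j : Interaction Λ M} (h : Prunes i l' j)
    (hi : i.lifelinesIn (H ∪ {l})) : (RV.rmv H j).traces ⊆ (RV.rmv H i).traces := by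
  induction h with
  | empty | act => exact subset_rfl
  | strict _ _ ih1 ih2 => exact traces_strict_mono (ih1 hi.1) (ih2 hi.2)
  | seq h1 h2 ih1 ih2 =>
    exact traces_seq_mono (h1.lifelinesIn hi.1).rmv_singleton (h2.lifelinesIn hi.2).rmv_singleton
      (ih1 hi.1) (ih2 hi.2)
  | par _ _ ih1 ih2 => exact traces_par_mono (ih1 hi.1) (ih2 hi.2)
  | altBoth _ _ ih1 ih2 => exact traces_alt_mono (ih1 hi.1) (ih2 hi.2)
  | altL _ _ ih => exact Set.Subset.trans (ih hi.1) (traces_alt ▸ Set.subset_union_left)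
  | altR _ _ ih => exact Set.Subset.trans (ih hi.2) (traces_alt ▸ Set.subset_union_right)
  | loopS _ ih => exact fun _ => OpTrace.loopS_mono (ih hi)
  | loopW h ih => exact fun _ => OpTrace.loopW_mono (h.lifelinesIn hi).rmv_singleton (ih hi)
  | loopP _ ih => exact fun _ => OpTrace.loopP_mono (ih hi)
  | loopSElim => exact traces_empty_subset (.loopS _)
  | loopWElim => exact traces_empty_subset (.loopW _)
  | loopPElim => exact traces_empty_subset (.loopP _)

theorem Executes.traces_rmv_subset {i i' : Interaction Λ M} {a : Action Λ M} {p : List Bool}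
    (h : Executes i a p i') (ha : a.lifeline ∈ H) (hi : i.lifelinesIn (H ∪ {l})) :
    (RV.rmv H i').traces ⊆ (RV.rmv H i).traces := by
  induction h with
  | act a => simp [RV.rmv, ha]
  | altL _ _ ih => exact Set.Subset.trans (ih ha hi.1) (traces_alt ▸ Set.subset_union_left)
  | altR _ _ ih => exact Set.Subset.trans (ih ha hi.2) (traces_alt ▸ Set.subset_union_right)
  | parL _ _ ih => exact traces_par_mono (ih ha hi.1) subset_rfl
  | parR _ _ ih => exact traces_par_mono subset_rfl (ih ha hi.2)
  | strictL _ _ ih => exact traces_strict_mono (ih ha hi.1) subset_rfl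
  | strictR ht _ ih => exact Set.Subset.trans (ih ha hi.2) (traces_subset_strict (ht.rmv H))
  | seqL _ hex ih =>
    exact traces_seq_mono (hex.lifelinesIn hi.1).rmv_singleton hi.2.rmv_singleton
      (ih ha hi.1) subset_rfl
  | seqR hp hex ih =>
    exact traces_seq_mono (hp.lifelinesIn hi.1).rmv_singleton (hex.lifelinesIn hi.2).rmv_singleton
      (hp.traces_rmv_subset hi.1) (ih ha hi.2)
  | loopS _ ih =>
    intro t ht
    obtain ⟨u, v, hu, hv, rfl⟩ := opTrace_strict_iff.1 ht
    exact (ih ha hi hu).loopS_append hv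
  | @loopW i₁ _ _ _ _ hex hp ih =>
    intro t ht
    have hA : (RV.rmv H i₁).lifelinesIn {l} := hi.rmv_singleton
    have hA' := (hex.lifelinesIn hi).rmv_singleton
    obtain ⟨t₀, _, h₀, hrest, rfl⟩ :=
      (opTrace_seq_iff (B := .seq _ (.loopW _)) (hp.lifelinesIn hi).rmv_singleton
        ⟨hA', hA⟩).1 ht
    obtain ⟨u, v, hu, hv, rfl⟩ := (opTrace_seq_iff (B := .loopW _) hA' hA).1 hrest
    exact (hp.traces_rmv_subset hi h₀).loopW_append_loopW hA ((ih ha hi hu).loopW_append hv)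
  | loopP _ ih =>
    intro t ht
    obtain ⟨u, v, hu, hv, hsh⟩ := opTrace_par_iff.1 ht
    exact (ih ha hi hu).loopP_shuffle hv hsh

end ProjectedTraces

section Analysis

def LocalPrefix (L : Set Λ) (i : Interaction Λ M) (μ : MultiTrace Λ M) (l : Λ) : Prop :=
  ∃ s, μ l ++ s ∈ (rmv (L \ {l}) i).traces

variable {L : Set Λ} {i : Interaction Λ M} {μ : MultiTrace Λ M} {l : Λ}

theorem localPrefix_of_eq_nil (h : μ l = []) : LocalPrefix L i μ l := by
  obtain ⟨s, hs⟩ := (rmv (L \ {l}) i).traces_nonempty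
  exact ⟨s, by rwa [h]⟩

theorem LocalPrefix.of_stepRmv {H : Set Λ} (hHL : H ⊆ L) (hH : ∀ l ∈ H, μ l = [])
    (h : ∀ l ∈ L \ H, LocalPrefix (L \ H) (rmv H i) (MultiTrace.rmv H μ) l) :
    ∀ l ∈ L, LocalPrefix L i μ l := by
  intro l hl
  by_cases hlH : l ∈ H
  · exact localPrefix_of_eq_nil (hH l hlH)
  · obtain ⟨s, hs⟩ := h l ⟨hl, hlH⟩
    have hset : H ∪ (L \ H) \ {l} = L \ {l} := by
      ext x
      have := @hHL x
      by_cases x ∈ H <;> by_cases x = l <;> simp_all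
    refine ⟨s, ?_⟩
    rwa [MultiTrace.rmv, if_neg hlH, rmv_rmv, hset] at hs

theorem LocalPrefix.of_stepExec {i' : Interaction Λ M} {a : Action Λ M} {p : List Bool}
    (hex : Executes i a p i') (haL : a.lifeline ∈ L) (hi : i.lifelinesIn L)
    (h : LocalPrefix L i' μ l) : LocalPrefix L i (MultiTrace.prepend a μ) l := by
  obtain ⟨s, hs⟩ := h
  refine ⟨s, ?_⟩
  by_cases hal : l = a.lifeline
  · rw [MultiTrace.prepend, if_pos hal]
    exact OpTrace.step (hex.rmv (by simp [hal])) hs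
  · rw [MultiTrace.prepend, if_neg hal]
    exact hex.traces_rmv_subset (H := L \ {l}) ⟨haL, Ne.symm hal⟩
      (hi.mono (Set.subset_sdiff_union L {l})) hs

theorem localPrefix_of_reaches_ok (h : Relation.ReflTransGen Step (.node L i μ) .ok)
    (hi : i.lifelinesIn L) : ∀ l ∈ L, LocalPrefix L i μ l := by
  generalize hv : Vertex.node L i μ = v at h
  induction h using Relation.ReflTransGen.head_induction_on generalizing L i μ with
  | refl => cases hv
  | head hstep _ ih =>
    subst hv
    rcases hstep with ⟨_, _⟩ | ⟨_, H, _, _, -, hHL, hH⟩ | ⟨_, _, _, _, _, _, haL, hex⟩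
    · exact fun l _ => localPrefix_of_eq_nil rfl
    · exact LocalPrefix.of_stepRmv hHL.subset hH (ih (hi.rmv H) rfl)
    · exact fun l hl => .of_stepExec hex haL hi (ih (hex.lifelinesIn hi) rfl l hl)

theorem reflTransGen_ok_of_opTrace {j : Interaction Λ M} {s : List (Action Λ M)} :
    ∀ {w : List (Action Λ M)}, OpTrace j (w ++ s) → (∀ a ∈ w, a.lifeline = l) →
      Relation.ReflTransGen Step (.node {l} j (localMT l w)) .ok
  | [], _, _ => by
    have : localMT l ([] : List (Action Λ M)) = MultiTrace.eps := by
      funext x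
      simp [localMT, MultiTrace.eps]
    exact this ▸ .single (.inl (.mk {l} j))
  | a :: w, h, hw => by
    obtain ⟨p, j', hex, h⟩ := opTrace_cons_iff.1 h
    have hal : a.lifeline = l := hw a List.mem_cons_self
    have : localMT l (a :: w) = MultiTrace.prepend a (localMT l w) := by
      funext x
      by_cases hx : x = l <;> simp [localMT, MultiTrace.prepend, hal, hx]
    rw [this]
    exact .head (.inr (.inr (.mk {l} j j' a p _ hal hex)))
      (reflTransGen_ok_of_opTrace h fun b hb => hw b (List.mem_cons_of_mem a hb))

end Analysis

/-- soundness of local analyses : if `(i,μ) ⤳* Ok` then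
for every lifeline `l ∈ L`, the local analysis on the projection of `i`
onto `l` and the look-ahead prefix `μ_|l[0..δ]` (viewed as a multi-trace
over `{l}`) also reaches `Ok`. -/
theorem statement17 {Λ M : Type} (L : Set Λ) (δ : ℕ)
    (i : Interaction Λ M) (μ : MultiTrace Λ M)
    (hi : i.lifelinesIn L) (hμ : MultiTrace.isOver L μ)
    (hok : Relation.ReflTransGen Step (Vertex.node L i μ) Vertex.ok) :
    ∀ l ∈ L, Relation.ReflTransGen Step
      (Vertex.node {l} (rmv (L \ {l}) i) (localMT l ((μ l).take δ))) Vertex.ok := by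
  intro l hl
  obtain ⟨s, hs⟩ := localPrefix_of_reaches_ok hok hi l hl
  rw [← List.take_append_drop δ (μ l), List.append_assoc] at hs
  exact reflTransGen_ok_of_opTrace hs fun a ha => hμ.2 l a (List.mem_of_mem_take ha)

end RV
end

section
/- Termination is preserved by lifeline removal: for any interaction i ∈ 𝕀(L) and any set of lifelines H with ∅ ⊊ H ⊊ L, if i↓ then rmv_H(i)↓. -/
open scoped Classical

namespace RV

variable {Λ M : Type}

namespace MultiTrace

/-- `μ ∈ 𝕄(L)` : components vanish outside `L` and every action of the
component on `l` occurs on `l`. -/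
def overL (L : Set Λ) (μ : MultiTrace Λ M) : Prop :=
  (∀ l ∉ L, μ l = []) ∧ ∀ l, ∀ a ∈ μ l, a.lifeline = l

end MultiTrace

end RV

namespace RV

theorem statement18_general {Λ M : Type} (H : Set Λ)
    (i : Interaction Λ M)
    (h : Terminates i) : Terminates (rmv H i) := by
  induction h with
  | empty => exact .empty
  | altL _ ih => exact .altL ih
  | altR _ ih => exact .altR ih
  | strict _ _ ih1 ih2 => exact .strict ih1 ih2
  | seq _ _ ih1 ih2 => exact .seq ih1 ih2
  | par _ _ ih1 ih2 => exact .par ih1 ih2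
  | loopS _ => exact .loopS _
  | loopW _ => exact .loopW _
  | loopP _ => exact .loopP _

/-- termination is preserved by lifeline removal : for any
`i ∈ 𝕀(L)` and `∅ ⊊ H ⊊ L`, if `i ↓` then `rmv_H(i) ↓`. -/
theorem statement18 {Λ M : Type} (L H : Set Λ)
    (hH0 : H.Nonempty) (hHL : H ⊂ L)
    (i : Interaction Λ M) (hi : i.lifelinesIn L)
    (h : Terminates i) : Terminates (rmv H i) :=
  statement18_general H i h

end RV
end

section
/- Collision is invariant under removal of other lifelines: for any interaction i ∈ 𝕀(L), any set of lifelines H with ∅ ⊊ H ⊊ L, and any lifeline l ∈ L∖H, one has i ⫫̸ l if and only if rmv_H(i) ⫫̸ l. -/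
open scoped Classical

namespace RV

variable {Λ M : Type}

namespace MultiTrace

/-- `μ ∈ 𝕄(L)` : components vanish outside `L` and every action of the
component on `l` occurs on `l`. -/
def over' (L : Set Λ) (μ : MultiTrace Λ M) : Prop :=
  (∀ l ∉ L, μ l = []) ∧ ∀ l, ∀ a ∈ μ l, a.lifeline = l

end MultiTrace

end RV

namespace RV

variable {Λ M : Type}

section Collides

variable {l : Λ}

@[simp]
theorem not_collides_empty : ¬ Collides (.empty : Interaction Λ M) l := nofun

@[simp]
theorem collides_act_iff {a : Action Λ M} : Collides (.act a) l ↔ a.lifeline = l :=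
  ⟨fun | .act h => h, .act⟩

@[simp]
theorem not_collides_loopS {i : Interaction Λ M} : ¬ Collides (.loopS i) l := nofun

@[simp]
theorem not_collides_loopW {i : Interaction Λ M} : ¬ Collides (.loopW i) l := nofun

@[simp]
theorem not_collides_loopP {i : Interaction Λ M} : ¬ Collides (.loopP i) l := nofun

variable {i1 i2 : Interaction Λ M}

@[simp]
theorem collides_alt_iff : Collides (.alt i1 i2) l ↔ Collides i1 l ∧ Collides i2 l :=
  ⟨fun | .alt h1 h2 => ⟨h1, h2⟩, fun ⟨h1, h2⟩ => .alt h1 h2⟩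

@[simp]
theorem collides_strict_iff : Collides (.strict i1 i2) l ↔ Collides i1 l ∨ Collides i2 l :=
  ⟨fun | .strictL h => .inl h | .strictR h => .inr h, fun h => h.elim .strictL .strictR⟩

@[simp]
theorem collides_seq_iff : Collides (.seq i1 i2) l ↔ Collides i1 l ∨ Collides i2 l :=
  ⟨fun | .seqL h => .inl h | .seqR h => .inr h, fun h => h.elim .seqL .seqR⟩

@[simp]
theorem collides_par_iff : Collides (.par i1 i2) l ↔ Collides i1 l ∨ Collides i2 l :=
  ⟨fun | .parL h => .inl h | .parR h => .inr h, fun h => h.elim .parL .parR⟩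

end Collides

theorem collides_rmv_iff {H : Set Λ} {l : Λ} (hl : l ∉ H) (i : Interaction Λ M) :
    Collides (rmv H i) l ↔ Collides i l := by
  induction i with
  | act a =>
    by_cases ha : a.lifeline ∈ H
    · simp only [rmv, if_pos ha, not_collides_empty, collides_act_iff, false_iff]
      exact fun h => hl (h ▸ ha)
    · simp only [rmv, if_neg ha]
  | _ => simp_all [rmv]

theorem statement19_general {Λ M : Type} (L H : Set Λ)
    (i : Interaction Λ M)
    (l : Λ) (hl : l ∈ L \ H) :
    Collides i l ↔ Collides (rmv H i) l :=
  (collides_rmv_iff hl.2 i).symm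

/-- collision is invariant under removal of other
lifelines : for `i ∈ 𝕀(L)`, `∅ ⊊ H ⊊ L` and `l ∈ L ∖ H`,
`i ⫫̸ l` iff `rmv_H(i) ⫫̸ l`. -/
theorem statement19 {Λ M : Type} (L H : Set Λ)
    (hH0 : H.Nonempty) (hHL : H ⊂ L)
    (i : Interaction Λ M) (hi : i.lifelinesIn L)
    (l : Λ) (hl : l ∈ L \ H) :
    Collides i l ↔ Collides (rmv H i) l :=
  statement19_general L H i l hl

end RV
end
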